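/- If (a + bx)(c + dx) ≥ 0 for all real x, where a, b, c, d are rational and a + b√2 > 0 and c + d√2 > 0, then there exists a nonnegative rational k with c = ka and d = kb. -/

import Mathlib

/-!
The discriminant of `(a + b x)(c + d x)` is `(a d - b c)²`, so nonnegativity forces `a d = b c`,
i.e. `(c, d) = k • (a, b)` for a rational `k` (as `(a, b) ≠ 0`). Then `p = k (a + b x)²`, and
evaluating at `x = √2`, where `a + b x ≠ 0`, gives `k ≥ 0`.
-/

theorem mul_eq_mul_of_forall_nonneg_mul {K : Type*} [Field K] [LinearOrder K]
    [IsStrictOrderedRing K] {a b c d : K} (h : ∀ x, 0 ≤ (a + b * x) * (c + d * x)) :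
    a * d = b * c := by
  have hdisc : discrim (b * d) (a * d + b * c) (a * c) ≤ 0 :=
    discrim_le_zero fun x => by linarith [h x]
  have hsq : discrim (b * d) (a * d + b * c) (a * c) = (a * d - b * c) ^ 2 := by
    rw [discrim]; ring
  rw [hsq] at hdisc
  exact sub_eq_zero.mp (pow_eq_zero_iff two_ne_zero |>.mp (le_antisymm hdisc (sq_nonneg _)))

theorem exists_eq_mul_of_mul_eq_mul {K : Type*} [Field K] {a b c d : K}
    (hab : a ≠ 0 ∨ b ≠ 0) (h : a * d = b * c) : ∃ k, c = k * a ∧ d = k * b := by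
  rcases hab with ha | hb
  · exact ⟨c / a, by field_simp, by field_simp; linear_combination h⟩
  · exact ⟨d / b, by field_simp; linear_combination -h, by field_simp⟩

theorem exists_nonneg_rat_ratio_of_xArea_nonneg_general
    (a b c d : ℚ)
    (ha : 0 < (a : ℝ) + (b : ℝ) * Real.sqrt 2)
    (h : ∀ x : ℝ, 0 ≤ ((a : ℝ) + (b : ℝ) * x) * ((c : ℝ) + (d : ℝ) * x)) :
    ∃ k : ℚ, 0 ≤ k ∧ c = k * a ∧ d = k * b := by
  have hab : a ≠ 0 ∨ b ≠ 0 := by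
    by_contra! hab
    simp [hab.1, hab.2] at ha
  have hcross : a * d = b * c := by exact_mod_cast mul_eq_mul_of_forall_nonneg_mul h
  obtain ⟨k, rfl, rfl⟩ := exists_eq_mul_of_mul_eq_mul hab hcross
  refine ⟨k, ?_, rfl, rfl⟩
  have hk : 0 ≤ (k : ℝ) * ((a : ℝ) + b * Real.sqrt 2) ^ 2 := by
    have := h (Real.sqrt 2)
    push_cast at this
    linarith
  exact_mod_cast nonneg_of_mul_nonneg_left hk (by positivity)

/-- If (a + bx)(c + dx) ≥ 0 for all real x, where a, b, c, d ∈ ℚ and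
a + b√2 > 0 and c + d√2 > 0, then c = ka and d = kb for some nonnegative
rational k. -/
theorem exists_nonneg_rat_ratio_of_xArea_nonneg
    (a b c d : ℚ)
    (ha : 0 < (a : ℝ) + (b : ℝ) * Real.sqrt 2)
    (hc : 0 < (c : ℝ) + (d : ℝ) * Real.sqrt 2)
    (h : ∀ x : ℝ, 0 ≤ ((a : ℝ) + (b : ℝ) * x) * ((c : ℝ) + (d : ℝ) * x)) :
    ∃ k : ℚ, 0 ≤ k ∧ c = k * a ∧ d = k * b :=
  exists_nonneg_rat_ratio_of_xArea_nonneg_general a b c d ha h
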